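/- Let G=(V,E) be a twinless strongly connected directed graph and let G^b be the undirected simple graph on vertex set V in which distinct vertices x and y are adjacent if and only if x ≈ y. Then every cycle of G^b spans a clique: if v₀, v₁, …, v_l is a cycle in G^b (so v_{i−1} is adjacent to v_i for i ∈ {1,…,l} and v_l is adjacent to v₀), then v_i ≈ v_j for all distinct i, j ∈ {0,1,…,l}. In particular, G^b is a chordal graph. -/

import Mathlib

/-- A directed graph on vertex type `V` is given by its edge relation `E`.
`restrictEdges E S` is the edge relation of the subgraph induced on `S`. -/
def restrictEdges {V : Type*} (E : V → V → Prop) (S : Set V) : V → V → Prop :=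
  fun a b => E a b ∧ a ∈ S ∧ b ∈ S

/-- The induced subgraph on `S` is strongly connected: every vertex of `S` reaches
every vertex of `S` by a directed path staying inside `S`. -/
def StronglyConnectedOn {V : Type*} (E : V → V → Prop) (S : Set V) : Prop :=
  ∀ ⦃x⦄, x ∈ S → ∀ ⦃y⦄, y ∈ S → Relation.ReflTransGen (restrictEdges E S) x y

/-- The induced subgraph on `S` is twinless strongly connected: it has a strongly
connected spanning subgraph (edge set `E'` inside `S`) with no pair of antiparallel
edges (if `(x, y) ∈ E'` then `(y, x) ∉ E'`). -/
def TwinlessSCOn {V : Type*} (E : V → V → Prop) (S : Set V) : Prop :=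
  ∃ E' : V → V → Prop,
    (∀ a b, E' a b → E a b ∧ a ∈ S ∧ b ∈ S) ∧
    (∀ a b, E' a b → ¬ E' b a) ∧
    StronglyConnectedOn E' S

/-- `C` is a strongly connected component of the subgraph induced on `S`:
a maximal subset of `S` whose induced subgraph is strongly connected. -/
def IsSCCWithin {V : Type*} (E : V → V → Prop) (S C : Set V) : Prop :=
  C ⊆ S ∧ StronglyConnectedOn E C ∧
    ∀ D : Set V, C ⊆ D → D ⊆ S → StronglyConnectedOn E D → D = C

/-- `C` is a twinless strongly connected component of the subgraph induced on `S`: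
a maximal subset of `S` whose induced subgraph is twinless strongly connected. -/
def IsTSCCWithin {V : Type*} (E : V → V → Prop) (S C : Set V) : Prop :=
  C ⊆ S ∧ TwinlessSCOn E C ∧
    ∀ D : Set V, C ⊆ D → D ⊆ S → TwinlessSCOn E D → D = C

/-- `x` and `y` lie in the same twinless strongly connected component of the
subgraph induced on `S`. -/
def SameTSCC {V : Type*} (E : V → V → Prop) (S : Set V) (x y : V) : Prop :=
  ∃ C : Set V, IsTSCCWithin E S C ∧ x ∈ C ∧ y ∈ C

/-- `x` and `y` lie in the same strongly connected component of the
subgraph induced on `S`. -/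
def SameSCC {V : Type*} (E : V → V → Prop) (S : Set V) (x y : V) : Prop :=
  ∃ C : Set V, IsSCCWithin E S C ∧ x ∈ C ∧ y ∈ C

/-- The relation `x ≈ y` ("x 2t-related to y"): `x` and `y` are distinct and, for every
vertex `w ∉ {x, y}`, the vertices `x, y` lie in the same twinless strongly connected
component of `G ∖ {w}`. -/
def Rel2t {V : Type*} (E : V → V → Prop) (x y : V) : Prop :=
  x ≠ y ∧ ∀ w : V, w ≠ x → w ≠ y → SameTSCC E (({w} : Set V)ᶜ) x y

/-- `x` and `y` are distinct and, for every vertex `w ∉ {x, y}`, the vertices `x, y`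
lie in the same strongly connected component of `G ∖ {w}`. -/
def Rel2s {V : Type*} (E : V → V → Prop) (x y : V) : Prop :=
  x ≠ y ∧ ∀ w : V, w ≠ x → w ≠ y → SameSCC E (({w} : Set V)ᶜ) x y

/-- A 2-twinless block: a maximal set `B` with `|B| ≥ 2` such that `x ≈ y`
for all distinct `x, y ∈ B`. -/
def Is2TwinlessBlock {V : Type*} (E : V → V → Prop) (B : Set V) : Prop :=
  B.Nontrivial ∧ (∀ ⦃x⦄, x ∈ B → ∀ ⦃y⦄, y ∈ B → x ≠ y → Rel2t E x y) ∧
    ∀ D : Set V, B ⊆ D → (∀ ⦃x⦄, x ∈ D → ∀ ⦃y⦄, y ∈ D → x ≠ y → Rel2t E x y) → D = B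

/-- A 2-strong block: a maximal set `B` with `|B| ≥ 2` such that for all distinct
`x, y ∈ B` and every `u ∉ {x, y}`, the vertices `x, y` lie in the same strongly
connected component of `G ∖ {u}`. -/
def Is2StrongBlock {V : Type*} (E : V → V → Prop) (B : Set V) : Prop :=
  B.Nontrivial ∧ (∀ ⦃x⦄, x ∈ B → ∀ ⦃y⦄, y ∈ B → x ≠ y → Rel2s E x y) ∧
    ∀ D : Set V, B ⊆ D → (∀ ⦃x⦄, x ∈ D → ∀ ⦃y⦄, y ∈ D → x ≠ y → Rel2s E x y) → D = B

/-- A twinless articulation point: a vertex whose removal increases the number of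
twinless strongly connected components. -/
def IsTwinlessArticulationPoint {V : Type*} (E : V → V → Prop) (v : V) : Prop :=
  ({C : Set V | IsTSCCWithin E Set.univ C}).ncard <
    ({C : Set V | IsTSCCWithin E (({v} : Set V)ᶜ) C}).ncard

/-- The undirected simple graph `G^b` on the vertex set of `G`, in which distinct
vertices `x` and `y` are adjacent if and only if `x ≈ y`. -/
def relGraph {V : Type*} (E : V → V → Prop) : SimpleGraph V where
  Adj x y := Rel2t E x y
  symm := by
    constructor
    rintro x y ⟨hxy, h⟩
    refine ⟨hxy.symm, fun w hwy hwx => ?_⟩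
    obtain ⟨C, hC, hx, hy⟩ := h w hwx hwy
    exact ⟨C, hC, hy, hx⟩
  loopless := ⟨fun x h => h.1 rfl⟩

/-- A simple graph is chordal if every cycle `v₀, v₁, …, v_l` of length at least four
(`l ≥ 3`) has a chord: an edge joining two non-consecutive vertices of the cycle. -/
def IsChordal {V : Type*} (G : SimpleGraph V) : Prop :=
  ∀ (l : ℕ) (v : ℕ → V), 3 ≤ l →
    (∀ i j : ℕ, i ≤ l → j ≤ l → i ≠ j → v i ≠ v j) →
    (∀ i : ℕ, 1 ≤ i → i ≤ l → G.Adj (v (i - 1)) (v i)) →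
    G.Adj (v l) (v 0) →
    ∃ i j : ℕ, i < j ∧ j ≤ l ∧ j ≠ i + 1 ∧ ¬(i = 0 ∧ j = l) ∧ G.Adj (v i) (v j)

/-!
Lying in a common twinless strongly connected component of `G ∖ {w}` is an equivalence
relation on `V ∖ {w}`: two twinless strongly connected vertex sets that meet have a twinless
strongly connected union (keep the edges of the first witness and those edges of the second
whose reverse is not in the first), so distinct components are disjoint. Now let `i < j` and
`w ∉ {vᵢ, vⱼ}`. If `w` is not among `vᵢ, …, vⱼ`, this arc of the cycle is a path of
`≈`-edges avoiding `w`; otherwise `w` lies strictly inside it and the complementary arc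
`vⱼ, …, v_l, v₀, …, vᵢ` avoids `w`. Either way `vᵢ` and `vⱼ` end up in the same component of
`G ∖ {w}`, so `vᵢ ≈ vⱼ`, and `v₀ ≈ v₂` is a chord of any cycle of length at least four.
-/

section TwinlessComponents

variable {V : Type*} {E : V → V → Prop}

open Relation

theorem twinlessSCOn_singleton (x : V) : TwinlessSCOn E {x} := by
  refine ⟨fun _ _ => False, fun _ _ => False.elim, fun _ _ h _ => h, ?_⟩
  rintro a rfl b rfl
  exact .refl

theorem TwinlessSCOn.union {C₁ C₂ : Set V} (h₁ : TwinlessSCOn E C₁) (h₂ : TwinlessSCOn E C₂)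
    (hC : (C₁ ∩ C₂).Nonempty) : TwinlessSCOn E (C₁ ∪ C₂) := by
  obtain ⟨E₁, hE₁, hE₁twin, hE₁sc⟩ := h₁
  obtain ⟨E₂, hE₂, hE₂twin, hE₂sc⟩ := h₂
  obtain ⟨z, hz₁, hz₂⟩ := hC
  set F : V → V → Prop := fun a b => E₁ a b ∨ (E₂ a b ∧ ¬ E₁ b a)
  have hF : ∀ a b, F a b → E a b ∧ a ∈ C₁ ∪ C₂ ∧ b ∈ C₁ ∪ C₂ := by
    rintro a b (h | ⟨h, -⟩)
    · exact ⟨(hE₁ a b h).1, .inl (hE₁ a b h).2.1, .inl (hE₁ a b h).2.2⟩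
    · exact ⟨(hE₂ a b h).1, .inr (hE₂ a b h).2.1, .inr (hE₂ a b h).2.2⟩
  have hFtwin : ∀ a b, F a b → ¬ F b a := by
    rintro a b (h | ⟨h, hn⟩) (h' | ⟨h', hn'⟩)
    exacts [hE₁twin a b h h', hn' h, hn h', hE₂twin a b h h']
  have reach₁ : ∀ ⦃x⦄, x ∈ C₁ → ∀ ⦃y⦄, y ∈ C₁ →
      ReflTransGen (restrictEdges F (C₁ ∪ C₂)) x y := fun x hx y hy =>
    ReflTransGen.mono (fun a b hab => ⟨.inl hab.1, .inl hab.2.1, .inl hab.2.2⟩) _ _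
      (hE₁sc hx hy)
  have reach₂ : ∀ ⦃x⦄, x ∈ C₂ → ∀ ⦃y⦄, y ∈ C₂ →
      ReflTransGen (restrictEdges F (C₁ ∪ C₂)) x y := by
    refine fun x hx y hy => ReflTransGen.lift' id (fun a b hab => ?_) _ _ (hE₂sc hx hy)
    by_cases hrev : E₁ b a
    · -- a dropped `E₂`-edge joins two vertices of `C₁`, which are connected through `E₁`
      exact reach₁ (hE₁ b a hrev).2.2 (hE₁ b a hrev).2.1
    · exact .single ⟨.inr ⟨hab.1, hrev⟩, .inr hab.2.1, .inr hab.2.2⟩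
  have reach_z : ∀ ⦃x⦄, x ∈ C₁ ∪ C₂ → ReflTransGen (restrictEdges F (C₁ ∪ C₂)) x z ∧
      ReflTransGen (restrictEdges F (C₁ ∪ C₂)) z x := by
    rintro x (hx | hx)
    exacts [⟨reach₁ hx hz₁, reach₁ hz₁ hx⟩, ⟨reach₂ hx hz₂, reach₂ hz₂ hx⟩]
  exact ⟨F, hF, hFtwin, fun x hx y hy => (reach_z hx).1.trans (reach_z hy).2⟩

theorem IsTSCCWithin.eq_of_inter_nonempty {S C₁ C₂ : Set V} (h₁ : IsTSCCWithin E S C₁)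
    (h₂ : IsTSCCWithin E S C₂) (hC : (C₁ ∩ C₂).Nonempty) : C₁ = C₂ := by
  have hunion := h₁.2.1.union h₂.2.1 hC
  have hsub := Set.union_subset h₁.1 h₂.1
  rw [← h₁.2.2 _ Set.subset_union_left hsub hunion, h₂.2.2 _ Set.subset_union_right hsub hunion]

theorem exists_isTSCCWithin_mem [Finite V] {S : Set V} {x : V} (hx : x ∈ S) :
    ∃ C, IsTSCCWithin E S C ∧ x ∈ C := by
  obtain ⟨C, ⟨hxC, hCS, hCtwin⟩, hCmax⟩ :=
    (Set.toFinite {C : Set V | x ∈ C ∧ C ⊆ S ∧ TwinlessSCOn E C}).exists_maximal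
      ⟨{x}, rfl, Set.singleton_subset_iff.2 hx, twinlessSCOn_singleton x⟩
  refine ⟨C, ⟨hCS, hCtwin, fun D hCD hDS hDtwin => ?_⟩, hxC⟩
  exact (hCmax ⟨hCD hxC, hDS, hDtwin⟩ hCD).antisymm hCD

theorem SameTSCC.refl [Finite V] {S : Set V} {x : V} (hx : x ∈ S) : SameTSCC E S x x :=
  let ⟨C, hC, hxC⟩ := exists_isTSCCWithin_mem hx
  ⟨C, hC, hxC, hxC⟩

theorem SameTSCC.symm {S : Set V} {x y : V} (h : SameTSCC E S x y) : SameTSCC E S y x :=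
  let ⟨C, hC, hx, hy⟩ := h
  ⟨C, hC, hy, hx⟩

theorem SameTSCC.trans {S : Set V} {x y z : V} (hxy : SameTSCC E S x y)
    (hyz : SameTSCC E S y z) : SameTSCC E S x z := by
  obtain ⟨C, hC, hx, hy⟩ := hxy
  obtain ⟨D, hD, hy', hz⟩ := hyz
  exact ⟨C, hC, hx, hC.eq_of_inter_nonempty hD ⟨y, hy, hy'⟩ ▸ hz⟩

theorem Rel2t.symm {x y : V} (h : Rel2t E x y) : Rel2t E y x :=
  ⟨h.1.symm, fun w hwy hwx => (h.2 w hwx hwy).symm⟩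

end TwinlessComponents

section Cycles

variable {V : Type*} [Finite V] {E : V → V → Prop}

theorem sameTSCC_of_rel2t_chain {v : ℕ → V} {w : V} {a b : ℕ} (hab : a ≤ b)
    (hadj : ∀ m, a ≤ m → m < b → Rel2t E (v m) (v (m + 1)))
    (hw : ∀ m, a ≤ m → m ≤ b → w ≠ v m) :
    SameTSCC E ({w}ᶜ) (v a) (v b) := by
  induction b, hab using Nat.le_induction with
  | base => exact .refl (Set.mem_compl_singleton_iff.2 (hw a le_rfl le_rfl).symm)
  | succ n han ih =>
    refine (ih (fun m h₁ h₂ => hadj m h₁ (by omega)) fun m h₁ h₂ => hw m h₁ (by omega)).trans ?_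
    exact (hadj n han (by omega)).2 w (hw n han (by omega)) (hw (n + 1) (by omega) le_rfl)

theorem rel2t_of_cycle {l : ℕ} {v : ℕ → V}
    (hinj : ∀ i j, i ≤ l → j ≤ l → i ≠ j → v i ≠ v j)
    (hadj : ∀ m < l, Rel2t E (v m) (v (m + 1))) (hlast : Rel2t E (v l) (v 0))
    {i j : ℕ} (hi : i ≤ l) (hj : j ≤ l) (hij : i ≠ j) : Rel2t E (v i) (v j) := by
  wlog hlt : i < j generalizing i j
  · exact (this hj hi hij.symm (by omega)).symm
  refine ⟨hinj i j hi hj hij, fun w hwi hwj => ?_⟩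
  by_cases hinner : ∀ m, i ≤ m → m ≤ j → w ≠ v m
  · exact sameTSCC_of_rel2t_chain hlt.le (fun m _ hm => hadj m (by omega)) hinner
  push Not at hinner
  obtain ⟨k, hik, hkj, rfl⟩ := hinner
  have hk_ne_i : k ≠ i := by rintro rfl; exact hwi rfl
  have hk_ne_j : k ≠ j := by rintro rfl; exact hwj rfl
  have hout : ∀ m ≤ l, m ≤ i ∨ j ≤ m → v k ≠ v m := fun m hm hm' =>
    hinj k m (by omega) hm (by omega)
  have h₁ : SameTSCC E ({v k}ᶜ) (v j) (v l) :=
    sameTSCC_of_rel2t_chain hj (fun m _ hm => hadj m hm) fun m hm _ => hout m (by omega) (by omega)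
  have h₂ : SameTSCC E ({v k}ᶜ) (v l) (v 0) :=
    hlast.2 (v k) (hout l le_rfl (by omega)) (hout 0 (by omega) (by omega))
  have h₃ : SameTSCC E ({v k}ᶜ) (v 0) (v i) :=
    sameTSCC_of_rel2t_chain (Nat.zero_le i) (fun m _ hm => hadj m (by omega))
      fun m _ hm => hout m (by omega) (by omega)
  exact (h₁.trans h₂ |>.trans h₃).symm

end Cycles

theorem relGraph_cycles_span_cliques_and_chordal_general
    {V : Type*} [Fintype V] (E : V → V → Prop) :
    (∀ (l : ℕ) (v : ℕ → V), 2 ≤ l →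
      (∀ i j : ℕ, i ≤ l → j ≤ l → i ≠ j → v i ≠ v j) →
      (∀ i : ℕ, 1 ≤ i → i ≤ l → (relGraph E).Adj (v (i - 1)) (v i)) →
      (relGraph E).Adj (v l) (v 0) →
      ∀ i j : ℕ, i ≤ l → j ≤ l → i ≠ j → Rel2t E (v i) (v j)) ∧
    IsChordal (relGraph E) := by
  have hclique : ∀ (l : ℕ) (v : ℕ → V),
      (∀ i j : ℕ, i ≤ l → j ≤ l → i ≠ j → v i ≠ v j) →
      (∀ i : ℕ, 1 ≤ i → i ≤ l → (relGraph E).Adj (v (i - 1)) (v i)) →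
      (relGraph E).Adj (v l) (v 0) →
      ∀ i j : ℕ, i ≤ l → j ≤ l → i ≠ j → Rel2t E (v i) (v j) :=
    fun l v hinj hadj hlast i j hi hj hij =>
      rel2t_of_cycle hinj (fun m hm => by simpa [relGraph] using hadj (m + 1) (by omega) hm)
        hlast hi hj hij
  refine ⟨fun l v _ => hclique l v, fun l v hl hinj hadj hlast => ?_⟩
  refine ⟨0, 2, by omega, by omega, by omega, by omega, ?_⟩
  exact hclique l v hinj hadj hlast 0 2 (by omega) (by omega) (by omega)

/-- Every cycle of `G^b` spans a clique: if `v₀, v₁, …, v_l` is a cycle in `G^b`, then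
`v_i ≈ v_j` for all distinct `i, j ∈ {0, …, l}`. In particular, `G^b` is chordal. -/
theorem relGraph_cycles_span_cliques_and_chordal
    {V : Type*} [Fintype V] (E : V → V → Prop)
    (hG : TwinlessSCOn E Set.univ) :
    (∀ (l : ℕ) (v : ℕ → V), 2 ≤ l →
      (∀ i j : ℕ, i ≤ l → j ≤ l → i ≠ j → v i ≠ v j) →
      (∀ i : ℕ, 1 ≤ i → i ≤ l → (relGraph E).Adj (v (i - 1)) (v i)) →
      (relGraph E).Adj (v l) (v 0) →
      ∀ i j : ℕ, i ≤ l → j ≤ l → i ≠ j → Rel2t E (v i) (v j)) ∧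
    IsChordal (relGraph E) :=
  relGraph_cycles_span_cliques_and_chordal_general E
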